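/- For every integer n ≥ 1, Σ_{m=0}^n (−1)^m·A_{nm} = 1/A_{n0}. -/

import Mathlib

/-!
For fixed `n`, `Γ(n+m+1/2)/Γ(m+1/2) = p(m+1/2)` with `p` the rising factorial `x(x+1)⋯(x+n-1)`,
so `n! · Σ (-1)^m A_{nm} = Σ (-1)^m C(n,m) p(m+1/2)/(2m-1)`. Dividing by `X - 1` gives
`p(x) = (x-1) q(x) + n!` with `deg q < n`; the `q`-part is killed by the `n`-th alternating
binomial sum (an `n`-th forward difference), and what remains is `n!/2 · Σ (-1)^m C(n,m)/(m-1/2)`,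
which the partial fraction identity `Σ (-1)^k C(n,k)/(y+k) = n!/(y(y+1)⋯(y+n))` at `y = -1/2`
evaluates to `-(n!)²/p(1/2)`; on the other side, `A_{n0} = -p(1/2)/n!`.
-/

open Finset

/-- The coefficient `A_{nm} := Γ(n+m+1/2) / ((2m-1)·(n-m)!·m!·Γ(m+1/2))`. -/
noncomputable def Acoef (n m : ℕ) : ℝ :=
  Real.Gamma ((n : ℝ) + m + 1 / 2) /
    ((2 * (m : ℝ) - 1) * (Nat.factorial (n - m) : ℝ) * (Nat.factorial m : ℝ) *
      Real.Gamma ((m : ℝ) + 1 / 2))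

open Polynomial
open scoped fwdDiff Nat

section AlternatingSums

variable {R : Type*} [CommRing R]

theorem alternating_sum_choose_eq_fwdDiff_iter (f : R → R) (n : ℕ) (y : R) :
    ∑ k ∈ range (n + 1), (-1) ^ k * (n.choose k : R) * f (y + k) =
      (-1) ^ n * (Δ_[1])^[n] f y := by
  rw [fwdDiff_iter_eq_sum_shift, mul_sum]
  refine sum_congr rfl fun k hk => ?_
  obtain ⟨j, rfl⟩ := Nat.exists_eq_add_of_le (Nat.lt_succ_iff.mp (mem_range.mp hk))
  have hsign : (-1 : R) ^ (k + j) * (-1) ^ j = (-1) ^ k := by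
    rw [pow_add, mul_assoc, ← mul_pow, neg_one_mul, neg_neg, one_pow, mul_one]
  rw [Nat.add_sub_cancel_left, zsmul_eq_mul, nsmul_one]
  push_cast
  linear_combination (-(↑((k + j).choose k) * f (y + k))) * hsign

theorem Polynomial.alternating_sum_choose_eval_eq_zero {P : R[X]} {n : ℕ}
    (hP : P.degree < n) (y : R) :
    ∑ k ∈ range (n + 1), (-1) ^ k * (n.choose k : R) * P.eval (y + k) = 0 := by
  rcases eq_or_ne P 0 with rfl | hP0
  · simp
  rw [alternating_sum_choose_eq_fwdDiff_iter P.eval,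
    fwdDiff_iter_eq_zero_of_degree_lt ((natDegree_lt_iff_degree_lt hP0).mpr hP), Pi.zero_apply,
    mul_zero]

end AlternatingSums

section Pochhammer

variable {K : Type*} [Field K]

theorem ascPochhammer_succ_eval_left (n : ℕ) (y : K) :
    (ascPochhammer K (n + 1)).eval y = y * (ascPochhammer K n).eval (y + 1) := by
  simp [ascPochhammer_succ_left]

theorem fwdDiff_iter_inv (n : ℕ) {y : K} (hy : (ascPochhammer K (n + 1)).eval y ≠ 0) :
    (Δ_[1])^[n] (fun x : K => x⁻¹) y = (-1) ^ n * n ! / (ascPochhammer K (n + 1)).eval y := by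
  induction n generalizing y with
  | zero => simp
  | succ n ih =>
    have hleft := ascPochhammer_succ_eval_left (n + 1) y
    have hright := ascPochhammer_succ_eval (n + 1) y
    obtain ⟨-, hy₁⟩ : y ≠ 0 ∧ (ascPochhammer K (n + 1)).eval (y + 1) ≠ 0 := by
      rwa [hleft, mul_ne_zero_iff] at hy
    obtain ⟨hy₀, -⟩ : (ascPochhammer K (n + 1)).eval y ≠ 0 ∧ y + (n + 1 : ℕ) ≠ 0 := by
      rwa [hright, mul_ne_zero_iff] at hy
    rw [Function.iterate_succ_apply', fwdDiff, ih hy₁, ih hy₀, div_sub_div _ _ hy₁ hy₀,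
      div_eq_div_iff (mul_ne_zero hy₁ hy₀) hy, Nat.factorial_succ]
    push_cast at hright ⊢
    linear_combination (-1) ^ n * (n ! : K) * ((ascPochhammer K (n + 1)).eval y * hleft -
      (ascPochhammer K (n + 1)).eval (y + 1) * hright)

theorem alternating_sum_choose_inv {n : ℕ} {y : K}
    (hy : (ascPochhammer K (n + 1)).eval y ≠ 0) :
    ∑ k ∈ range (n + 1), (-1) ^ k * (n.choose k : K) * (y + k)⁻¹ =
      n ! / (ascPochhammer K (n + 1)).eval y := by
  rw [alternating_sum_choose_eq_fwdDiff_iter (fun x : K => x⁻¹), fwdDiff_iter_inv n hy,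
    ← mul_div_assoc, ← mul_assoc, ← pow_add, Even.neg_one_pow ⟨n, rfl⟩, one_mul]

theorem exists_ascPochhammer_eval_eq_sub_one_mul_add (n : ℕ) :
    ∃ Q : K[X], Q.degree < n ∧
      ∀ x, (ascPochhammer K n).eval x = (x - 1) * Q.eval x + n ! := by
  refine ⟨ascPochhammer K n /ₘ (X - C 1), ?_, fun x => ?_⟩
  · have hne : ascPochhammer K n ≠ 0 := (monic_ascPochhammer K n).ne_zero
    calc (ascPochhammer K n /ₘ (X - C 1)).degree
        < (ascPochhammer K n).degree :=
          degree_divByMonic_lt _ _ hne (by rw [degree_X_sub_C]; exact one_pos)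
      _ = n := by rw [degree_eq_natDegree hne, ascPochhammer_natDegree]
  · conv_lhs => rw [← modByMonic_add_div (ascPochhammer K n) (X - C 1)]
    rw [modByMonic_X_sub_C_eq_C_eval, ascPochhammer_eval_one]
    simp [add_comm]

end Pochhammer

theorem Real.Gamma_add_nat {x : ℝ} (n : ℕ) (hx : ∀ k < n, x + k ≠ 0) :
    Real.Gamma (x + n) = (ascPochhammer ℝ n).eval x * Real.Gamma x := by
  induction n with
  | zero => simp
  | succ n ih =>
    rw [Nat.cast_succ, ← add_assoc, Real.Gamma_add_one (hx n n.lt_succ_self),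
      ih fun k hk => hx k (hk.trans n.lt_succ_self), ascPochhammer_succ_eval]
    ring

theorem Acoef_eq_ascPochhammer (n m : ℕ) :
    Acoef n m = (ascPochhammer ℝ n).eval ((m : ℝ) + 1 / 2) /
      ((2 * (m : ℝ) - 1) * ((n - m) ! : ℝ) * (m ! : ℝ)) := by
  have hΓ : Real.Gamma ((m : ℝ) + 1 / 2) ≠ 0 := (Real.Gamma_pos_of_pos (by positivity)).ne'
  rw [Acoef, show (n : ℝ) + m + 1 / 2 = (m + 1 / 2) + n by ring,
    Real.Gamma_add_nat n fun k _ => by positivity, mul_div_mul_right _ _ hΓ]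

theorem factorial_mul_Acoef {n m : ℕ} (hm : m ≤ n) :
    n ! * Acoef n m =
      n.choose m * (ascPochhammer ℝ n).eval ((m : ℝ) + 1 / 2) / (2 * (m : ℝ) - 1) := by
  rw [Acoef_eq_ascPochhammer, Nat.cast_choose ℝ hm]
  field_simp

theorem Acoef_zero (n : ℕ) : Acoef n 0 = -((ascPochhammer ℝ n).eval (1 / 2) / n !) := by
  simp [Acoef_eq_ascPochhammer, div_neg]

theorem alternating_sum_choose_ascPochhammer_div (n : ℕ) :
    ∑ m ∈ range (n + 1), (-1) ^ m *
        (n.choose m * (ascPochhammer ℝ n).eval ((m : ℝ) + 1 / 2) / (2 * (m : ℝ) - 1)) =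
      -(n ! : ℝ) ^ 2 / (ascPochhammer ℝ n).eval (1 / 2) := by
  obtain ⟨Q, hQ, hsplit⟩ := exists_ascPochhammer_eval_eq_sub_one_mul_add (K := ℝ) n
  have hpos : 0 < (ascPochhammer ℝ n).eval (1 / 2 : ℝ) := ascPochhammer_pos n _ (by norm_num)
  have hpoch : (ascPochhammer ℝ (n + 1)).eval (-1 / 2 : ℝ) =
      -1 / 2 * (ascPochhammer ℝ n).eval (1 / 2) := by
    rw [ascPochhammer_succ_eval_left]
    norm_num
  have hterm : ∀ m : ℕ, (-1 : ℝ) ^ m *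
      (n.choose m * (ascPochhammer ℝ n).eval ((m : ℝ) + 1 / 2) / (2 * (m : ℝ) - 1)) =
        1 / 2 * ((-1) ^ m * n.choose m * Q.eval (1 / 2 + (m : ℝ))) +
          n ! / 2 * ((-1) ^ m * n.choose m * (-1 / 2 + (m : ℝ))⁻¹) := by
    intro m
    have hm : -1 / 2 + (m : ℝ) ≠ 0 := by
      have : (2 * m : ℝ) ≠ 1 := by exact_mod_cast (by omega : 2 * m ≠ 1)
      contrapose! this
      linarith
    rw [add_comm (m : ℝ), hsplit, show 1 / 2 + (m : ℝ) - 1 = -1 / 2 + m by ring,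
      show 2 * (m : ℝ) - 1 = 2 * (-1 / 2 + m) by ring]
    generalize -1 / 2 + (m : ℝ) = d at hm ⊢
    field_simp
  rw [sum_congr rfl fun m _ => hterm m, sum_add_distrib, ← mul_sum, ← mul_sum,
    Q.alternating_sum_choose_eval_eq_zero hQ,
    alternating_sum_choose_inv (by rw [hpoch]; positivity), hpoch]
  field_simp
  ring

theorem stmt_4_general (n : ℕ) :
    ∑ m ∈ Finset.range (n + 1), (-1 : ℝ) ^ m * Acoef n m = 1 / Acoef n 0 := by
  have hpos : 0 < (ascPochhammer ℝ n).eval (1 / 2 : ℝ) := ascPochhammer_pos n _ (by norm_num)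
  have key : n ! * ∑ m ∈ range (n + 1), (-1 : ℝ) ^ m * Acoef n m =
      -(n ! : ℝ) ^ 2 / (ascPochhammer ℝ n).eval (1 / 2) := by
    rw [mul_sum, ← alternating_sum_choose_ascPochhammer_div]
    refine sum_congr rfl fun m hm => ?_
    rw [mul_left_comm, factorial_mul_Acoef (Nat.lt_succ_iff.mp (mem_range.mp hm))]
  rw [Acoef_zero]
  field_simp at key ⊢
  linear_combination key

/-- For every integer `n ≥ 1`, `Σ_{m=0}^n (-1)^m·A_{nm} = 1/A_{n0}`. -/
theorem stmt_4 (n : ℕ) (hn : 1 ≤ n) :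
    ∑ m ∈ Finset.range (n + 1), (-1 : ℝ) ^ m * Acoef n m = 1 / Acoef n 0 :=
  stmt_4_general n
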